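/- Composition–Diamond lemma for double-free modules (Chibrikov): Let S ⊆ mod_{k⟨X⟩}⟨Y⟩ be a nonempty set of monic elements and ≺ the order on X*Y induced by a monomial well order on X* and a well order on Y. Then the following are equivalent: (1) S is a Gröbner–Shirshov basis in mod_{k⟨X⟩}⟨Y⟩; (2) for every nonzero f ∈ k⟨X⟩S, the leading term satisfies f̄ = a·s̄ for some a ∈ X* and s ∈ S; (2') every nonzero f ∈ k⟨X⟩S can be written f = Σᵢ αᵢaᵢsᵢ with αᵢ ∈ k nonzero, aᵢ ∈ X*, sᵢ ∈ S and a₁s̄₁ ≻ a₂s̄₂ ≻ … ; (3) the set Red(S) = {w ∈ X*Y : w ≠ a·s̄ for all a ∈ X*, s ∈ S} maps to a k-linear basis of the quotient k⟨X⟩-module mod_{k⟨X⟩}⟨Y⟩ / k⟨X⟩S. -/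

import Mathlib

/-! Chibrikov's Composition–Diamond lemma for "double-free" modules
`mod_{k⟨X⟩}⟨Y⟩`, the free left `k⟨X⟩`-module with basis `Y`. -/

open MonoidAlgebra

/-- The free associative algebra `k⟨X⟩`, with `k`-basis the free monoid `X*`. -/
abbrev FreeAssocAlg (k X : Type*) [Field k] : Type _ := MonoidAlgebra k (FreeMonoid X)

/-- The free left `k⟨X⟩`-module `mod_{k⟨X⟩}⟨Y⟩` with basis `Y`; its `k`-basis is
`X*Y = {u·y : u ∈ X*, y ∈ Y}`, the coefficient of `u·y` in `f` being `f y u`. -/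
abbrev FreeMod (k X Y : Type*) [Field k] : Type _ := Y →₀ FreeAssocAlg k X

variable {k X Y : Type*} [Field k]

/-- The order `≺` on `X*Y` induced by an order `lt` on `X*` and an order `ltY` on `Y`:
`u₁y₁ ≺ u₂y₂` iff `u₁ < u₂`, or `u₁ = u₂` and `y₁ < y₂`. -/
def LtXY (lt : FreeMonoid X → FreeMonoid X → Prop) (ltY : Y → Y → Prop)
    (p q : FreeMonoid X × Y) : Prop :=
  lt p.1 q.1 ∨ (p.1 = q.1 ∧ ltY p.2 q.2)

/-- `(u, y)` is the leading term of `f ∈ mod_{k⟨X⟩}⟨Y⟩` with respect to `≺`. -/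
def LeadTerm (lt : FreeMonoid X → FreeMonoid X → Prop) (ltY : Y → Y → Prop)
    (f : FreeMod k X Y) (p : FreeMonoid X × Y) : Prop :=
  (f p.2).coeff p.1 ≠ 0 ∧ ∀ q : FreeMonoid X × Y, (f q.2).coeff q.1 ≠ 0 → q ≠ p → LtXY lt ltY q p

/-- `f` is monic: the coefficient of its leading term is `1`. -/
def IsMonicElt (lt : FreeMonoid X → FreeMonoid X → Prop) (ltY : Y → Y → Prop)
    (f : FreeMod k X Y) : Prop :=
  ∃ p : FreeMonoid X × Y, LeadTerm lt ltY f p ∧ (f p.2).coeff p.1 = 1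

/-- `h` is trivial modulo `(S, w)`: it can be written as `∑ αᵢ aᵢ sᵢ` with
`sᵢ ∈ S`, `aᵢ ∈ X*` and `aᵢ·s̄ᵢ ≺ w`. -/
def TrivialModM (lt : FreeMonoid X → FreeMonoid X → Prop) (ltY : Y → Y → Prop)
    (S : Set (FreeMod k X Y)) (h : FreeMod k X Y) (w : FreeMonoid X × Y) : Prop :=
  ∃ (n : ℕ) (α : Fin n → k) (a : Fin n → FreeMonoid X) (s : Fin n → FreeMod k X Y)
    (ws : Fin n → FreeMonoid X × Y),
      (∀ i, s i ∈ S) ∧ (∀ i, LeadTerm lt ltY (s i) (ws i)) ∧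
      h = ∑ i, MonoidAlgebra.single (a i) (α i) • s i ∧
      ∀ i, LtXY lt ltY (a i * (ws i).1, (ws i).2) w

/-- `S` is a Gröbner–Shirshov basis in `mod_{k⟨X⟩}⟨Y⟩`: every composition
`(f,g)_w = f − a·g` (where `w = f̄ = a·ḡ`) is trivial modulo `(S, w)`. -/
def IsGSBasisMod (lt : FreeMonoid X → FreeMonoid X → Prop) (ltY : Y → Y → Prop)
    (S : Set (FreeMod k X Y)) : Prop :=
  ∀ f ∈ S, ∀ g ∈ S, ∀ wf wg : FreeMonoid X × Y, ∀ a : FreeMonoid X,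
    LeadTerm lt ltY f wf → LeadTerm lt ltY g wg → wf = (a * wg.1, wg.2) →
    TrivialModM lt ltY S (f - MonoidAlgebra.single a (1 : k) • g) wf



section CDaux
variable {k X Y : Type*} [Field k]

instance : CoeFun (FreeAssocAlg k X) (fun _ => FreeMonoid X → k) := ⟨fun x => x.coeff⟩

section Ord
variable {lt : FreeMonoid X → FreeMonoid X → Prop} {ltY : Y → Y → Prop}

theorem ltXY_iff_lex {p q : FreeMonoid X × Y} : LtXY lt ltY p q ↔ Prod.Lex lt ltY p q :=
  (Prod.lex_def).symm

theorem ltXY_sto (hwo : IsWellOrder (FreeMonoid X) lt) (hwoY : IsWellOrder Y ltY) :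
    IsStrictTotalOrder (FreeMonoid X × Y) (LtXY lt ltY) := by
  have hi : IsIrrefl (FreeMonoid X) lt := ⟨fun a h => hwo.wf.asymmetric (a := a) (b := a) h h⟩
  have hiY : IsIrrefl Y ltY := ⟨fun a h => hwoY.wf.asymmetric (a := a) (b := a) h h⟩
  refine { trichotomous := ?_, irrefl := ?_, trans := ?_ }
  · intro p q hpq hqp
    rcases (haveI := hwo; trichotomous_of lt p.1 q.1) with h | h | h
    · exact absurd (Or.inl h) hpq
    · rcases (haveI := hwoY; trichotomous_of ltY p.2 q.2) with h2 | h2 | h2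
      · exact absurd (Or.inr ⟨h, h2⟩) hpq
      · exact Prod.ext h h2
      · exact absurd (Or.inr ⟨h.symm, h2⟩) hqp
    · exact absurd (Or.inl h) hqp
  · intro p h
    rcases h with h | ⟨_, h⟩
    · exact hi.irrefl _ h
    · exact hiY.irrefl _ h
  · rintro p q r (h | ⟨h, h2⟩) (h' | ⟨h', h2'⟩)
    · exact Or.inl (haveI := hwo; IsTrans.trans (r := lt) _ _ _ h h')
    · exact Or.inl (h' ▸ h)
    · exact Or.inl (h ▸ h')
    · exact Or.inr ⟨h.trans h', (haveI := hwoY; IsTrans.trans (r := ltY) _ _ _ h2 h2')⟩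

theorem ltXY_wf (hwo : IsWellOrder (FreeMonoid X) lt) (hwoY : IsWellOrder Y ltY) :
    WellFounded (LtXY lt ltY) :=
  Subrelation.wf (fun h => ltXY_iff_lex.mp h) (hwo.wf.prod_lex hwoY.wf)

theorem ltXY_asymm (hwo : IsWellOrder (FreeMonoid X) lt) (hwoY : IsWellOrder Y ltY)
    {p q : FreeMonoid X × Y} (h : LtXY lt ltY p q) : ¬ LtXY lt ltY q p := by
  have := ltXY_sto hwo hwoY
  intro h'
  exact this.toIsStrictOrder.toIrrefl.irrefl p (this.toIsStrictOrder.toIsTrans.trans _ _ _ h h')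
end Ord

theorem finset_exists_max' {α : Type*} {r : α → α → Prop} (sto : IsStrictTotalOrder α r)
    {s : Finset α} (hs : s.Nonempty) : ∃ p ∈ s, ∀ q ∈ s, q ≠ p → r q p := by
  classical
  letI := sto
  letI : LinearOrder α := linearOrderOfSTO r
  refine ⟨s.max' hs, s.max'_mem hs, fun q hq hne => ?_⟩
  exact lt_of_le_of_ne (s.le_max' q hq) hne

open Classical in
noncomputable def suppF (f : FreeMod k X Y) : Finset (FreeMonoid X × Y) :=
  f.support.biUnion fun y => (f y).coeff.support.image fun u => (u, y)

theorem mem_suppF {f : FreeMod k X Y} {p : FreeMonoid X × Y} :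
    p ∈ suppF f ↔ f p.2 p.1 ≠ 0 := by
  constructor
  · rintro h
    classical
    rcases Finset.mem_biUnion.mp h with ⟨y, _, hp⟩
    rcases Finset.mem_image.mp hp with ⟨u, hu, rfl⟩
    exact Finsupp.mem_support_iff.mp hu
  · intro h
    classical
    refine Finset.mem_biUnion.mpr ⟨p.2, Finsupp.mem_support_iff.mpr ?_, ?_⟩
    · intro h0; exact h (by rw [h0]; rfl)
    · exact Finset.mem_image.mpr ⟨p.1, Finsupp.mem_support_iff.mpr h, rfl⟩

section LT
variable {lt : FreeMonoid X → FreeMonoid X → Prop} {ltY : Y → Y → Prop}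
variable (hwo : IsWellOrder (FreeMonoid X) lt) (hwoY : IsWellOrder Y ltY)

theorem exists_leadTerm (hwo : IsWellOrder (FreeMonoid X) lt) (hwoY : IsWellOrder Y ltY)
    {f : FreeMod k X Y} (hf : f ≠ 0) : ∃ p, LeadTerm lt ltY f p := by
  have hne : (suppF f).Nonempty := by
    rcases Finsupp.ne_iff.mp hf with ⟨y, hy⟩
    rcases Finsupp.ne_iff.mp (MonoidAlgebra.coeff_injective.ne (by simpa using hy)) with ⟨u, hu⟩
    exact ⟨(u, y), mem_suppF.mpr (by simpa using hu)⟩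
  rcases finset_exists_max' (ltXY_sto hwo hwoY) hne with ⟨p, hp, hmax⟩
  exact ⟨p, mem_suppF.mp hp, fun q hq hne' => hmax q (mem_suppF.mpr hq) hne'⟩

theorem leadTerm_unique (hwo : IsWellOrder (FreeMonoid X) lt) (hwoY : IsWellOrder Y ltY)
    {f : FreeMod k X Y} {p q : FreeMonoid X × Y}
    (hp : LeadTerm lt ltY f p) (hq : LeadTerm lt ltY f q) : p = q := by
  by_contra hne
  exact ltXY_asymm hwo hwoY (hq.2 p hp.1 (fun h => hne h)) (hp.2 q hq.1 (fun h => hne h.symm))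

end LT

section Coeff
variable {lt : FreeMonoid X → FreeMonoid X → Prop} {ltY : Y → Y → Prop}

theorem smul_coeff_mul (a : FreeMonoid X) (α : k) (s : FreeMod k X Y) (y : Y) (u : FreeMonoid X) :
    (MonoidAlgebra.single a α • s) y (a * u) = α * s y u := by
  rw [Finsupp.smul_apply, smul_eq_mul]
  exact MonoidAlgebra.coeff_single_mul_eq_mul_coeff u (fun b _ => ⟨fun h => mul_left_cancel h, fun h => by rw [h]⟩)

theorem smul_coeff_ne_zero {a : FreeMonoid X} {α : k} {s : FreeMod k X Y} {y : Y}
    {v : FreeMonoid X} (h : (MonoidAlgebra.single a α • s) y v ≠ 0) :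
    ∃ u, v = a * u ∧ α * s y u ≠ 0 := by
  by_cases he : ∃ u, v = a * u
  · rcases he with ⟨u, rfl⟩
    exact ⟨u, rfl, by rwa [smul_coeff_mul] at h⟩
  · exfalso
    apply h
    rw [Finsupp.smul_apply, smul_eq_mul]
    exact MonoidAlgebra.single_mul_apply_of_not_exists_mul _ _ he

theorem ltXY_mul (hmono : ∀ u v a b : FreeMonoid X, lt u v → lt (a * u * b) (a * v * b))
    (a : FreeMonoid X) {p q : FreeMonoid X × Y} (h : LtXY lt ltY p q) :
    LtXY lt ltY (a * p.1, p.2) (a * q.1, q.2) := by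
  rcases h with h | ⟨h, h2⟩
  · left; have := hmono p.1 q.1 a 1 h; simpa using this
  · right; exact ⟨by rw [h], h2⟩

/-- Any monomial in the support of `single a α • s` is `≼ (a * s̄₁, s̄₂)`. -/
theorem smul_coeff_le (hmono : ∀ u v a b : FreeMonoid X, lt u v → lt (a * u * b) (a * v * b))
    {a : FreeMonoid X} {α : k} {s : FreeMod k X Y} {ws : FreeMonoid X × Y}
    (hs : LeadTerm lt ltY s ws) {q : FreeMonoid X × Y}
    (h : (MonoidAlgebra.single a α • s) q.2 q.1 ≠ 0) :
    q = (a * ws.1, ws.2) ∨ LtXY lt ltY q (a * ws.1, ws.2) := by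
  rcases smul_coeff_ne_zero h with ⟨u, hu, hne⟩
  have hsu : s q.2 u ≠ 0 := fun h0 => hne (by rw [h0, mul_zero])
  by_cases he : (u, q.2) = ws
  · left
    rw [← he]
    exact Prod.ext hu rfl
  · right
    have := ltXY_mul (ltY := ltY) hmono a (hs.2 (u, q.2) hsu he)
    rwa [← hu] at this

theorem leadTerm_smul (hmono : ∀ u v a b : FreeMonoid X, lt u v → lt (a * u * b) (a * v * b))
    {a : FreeMonoid X} {α : k} (hα : α ≠ 0) {s : FreeMod k X Y} {ws : FreeMonoid X × Y}
    (hs : LeadTerm lt ltY s ws) :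
    LeadTerm lt ltY (MonoidAlgebra.single a α • s) (a * ws.1, ws.2) := by
  constructor
  · show (MonoidAlgebra.single a α • s) ws.2 (a * ws.1) ≠ 0
    rw [smul_coeff_mul]
    exact mul_ne_zero hα hs.1
  · intro q hq hne
    rcases smul_coeff_le hmono hs hq with h | h
    · exact absurd h hne
    · exact h

end Coeff


/-- The basis monomial `u·y` of `FreeMod`. -/
noncomputable def monoM (p : FreeMonoid X × Y) : FreeMod k X Y :=
  Finsupp.single p.2 (MonoidAlgebra.single p.1 (1 : k))

open Classical in
theorem monoM_coeff (p q : FreeMonoid X × Y) :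
    (monoM (k := k) p) q.2 q.1 = if q = p then 1 else 0 := by
  classical
  rcases p with ⟨u, y⟩; rcases q with ⟨v, z⟩
  show (Finsupp.single y (MonoidAlgebra.single u (1 : k))) z v = _
  rw [Finsupp.single_apply]
  by_cases h1 : y = z
  · subst h1
    rw [if_pos rfl, MonoidAlgebra.single_apply]
    by_cases h2 : u = v
    · subst h2; simp
    · rw [if_neg h2, if_neg (by simp [Prod.ext_iff, Ne.symm h2])]
  · rw [if_neg h1]
    have hne : ((v, z) : FreeMonoid X × Y) ≠ (u, y) := fun h => h1 ((congrArg Prod.snd h).symm)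
    simp [hne]

theorem smul_monoM (a : FreeMonoid X) (α : k) (p : FreeMonoid X × Y) :
    MonoidAlgebra.single a α • monoM (k := k) p = α • monoM (k := k) (a * p.1, p.2) := by
  classical
  rcases p with ⟨u, y⟩
  show MonoidAlgebra.single a α • Finsupp.single y (MonoidAlgebra.single u (1 : k)) = _
  rw [Finsupp.smul_single, smul_eq_mul, MonoidAlgebra.single_mul_single]
  show _ = α • Finsupp.single y (MonoidAlgebra.single (a * u) (1 : k))
  rw [Finsupp.smul_single]
  simp [MonoidAlgebra.smul_single]

theorem eq_sum_monoM (f : FreeMod k X Y) :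
    f = ∑ p ∈ suppF f, (f p.2 p.1) • monoM (k := k) p := by
  classical
  refine Finsupp.ext fun y => MonoidAlgebra.ext (Finsupp.ext fun u => ?_)
  rw [Finsupp.finset_sum_apply, MonoidAlgebra.coeff_sum, Finsupp.finset_sum_apply]
  have hterm : ∀ p ∈ suppF f, (((f p.2 p.1) • monoM (k := k) p) y) u
      = if (u, y) = p then f p.2 p.1 else 0 := by
    intro p _
    rw [Finsupp.smul_apply, MonoidAlgebra.coeff_smul, Finsupp.smul_apply, smul_eq_mul]
    have := monoM_coeff (k := k) p (u, y)
    simp only at this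
    rw [this]
    by_cases h : ((u, y) : FreeMonoid X × Y) = p <;> simp [h]
  rw [Finset.sum_congr rfl hterm, Finset.sum_ite_eq (suppF f) ((u, y) : FreeMonoid X × Y)]
  by_cases h : ((u, y) : FreeMonoid X × Y) ∈ suppF f
  · simp [h]
  · rw [if_neg h]
    exact not_not.mp (fun hne => h (mem_suppF.mpr hne))


section Rep

/-- A term `α·a·s` (with recorded leading term `w` of `s`) in a representation. -/
structure RTerm (k X Y : Type*) [Field k] where
  c : k
  a : FreeMonoid X
  s : FreeMod k X Y
  w : FreeMonoid X × Y

/-- Sum of a list of representation terms. -/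
noncomputable def repSum (L : List (RTerm k X Y)) : FreeMod k X Y :=
  (L.map fun t => MonoidAlgebra.single t.a t.c • t.s).sum

/-- `a·s̄` for a term. -/
def rval (t : RTerm k X Y) : FreeMonoid X × Y := (t.a * t.w.1, t.w.2)

@[simp] theorem repSum_nil : repSum ([] : List (RTerm k X Y)) = 0 := rfl

theorem repSum_cons (t : RTerm k X Y) (L : List (RTerm k X Y)) :
    repSum (t :: L) = MonoidAlgebra.single t.a t.c • t.s + repSum L := by
  simp [repSum]

theorem repSum_append (L₁ L₂ : List (RTerm k X Y)) :
    repSum (L₁ ++ L₂) = repSum L₁ + repSum L₂ := by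
  simp [repSum]

variable {lt : FreeMonoid X → FreeMonoid X → Prop} {ltY : Y → Y → Prop}

/-- Support bound: every monomial of `repSum L` is `≼ rval t` for some `t ∈ L`. -/
theorem repSum_supp (hmono : ∀ u v a b : FreeMonoid X, lt u v → lt (a * u * b) (a * v * b))
    {L : List (RTerm k X Y)} (hG : ∀ t ∈ L, LeadTerm lt ltY t.s t.w)
    {q : FreeMonoid X × Y} (hq : (repSum L) q.2 q.1 ≠ 0) :
    ∃ t ∈ L, q = rval t ∨ LtXY lt ltY q (rval t) := by
  induction L with
  | nil => simp [repSum] at hq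
  | cons t L ih =>
    rw [repSum_cons] at hq
    by_cases h : (repSum L) q.2 q.1 = 0
    · have h1 : (MonoidAlgebra.single t.a t.c • t.s) q.2 q.1 ≠ 0 := by
        intro h0
        apply hq
        show (MonoidAlgebra.single t.a t.c • t.s) q.2 q.1 + (repSum L) q.2 q.1 = 0
        rw [h0, h]; ring
      exact ⟨t, List.mem_cons_self .., smul_coeff_le hmono (hG t (List.mem_cons_self ..)) h1⟩
    · rcases ih (fun t' ht' => hG t' (List.mem_cons_of_mem _ ht')) h with ⟨t', ht', hv⟩
      exact ⟨t', List.mem_cons_of_mem _ ht', hv⟩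

open Classical in
/-- The coefficient of `repSum L` at `W`, when every `rval` is `≼ W`, is the sum
of coefficients of the terms with `rval t = W` (terms assumed monic). -/
theorem repSum_coeff (hwo : IsWellOrder (FreeMonoid X) lt) (hwoY : IsWellOrder Y ltY)
    (hmono : ∀ u v a b : FreeMonoid X, lt u v → lt (a * u * b) (a * v * b))
    {L : List (RTerm k X Y)} (hG : ∀ t ∈ L, LeadTerm lt ltY t.s t.w)
    (hmon : ∀ t ∈ L, t.s t.w.2 t.w.1 = 1)
    {W : FreeMonoid X × Y} (hle : ∀ t ∈ L, rval t = W ∨ LtXY lt ltY (rval t) W) :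
    (repSum L) W.2 W.1 = ((L.filter fun t => rval t = W).map fun t => t.c).sum := by
  induction L with
  | nil => simp [repSum]
  | cons t L ih =>
    have ht := List.mem_cons_self (a := t) (l := L)
    have hrec := ih (fun t' h => hG t' (List.mem_cons_of_mem _ h))
      (fun t' h => hmon t' (List.mem_cons_of_mem _ h))
      (fun t' h => hle t' (List.mem_cons_of_mem _ h))
    rw [repSum_cons]
    show (MonoidAlgebra.single t.a t.c • t.s) W.2 W.1 + (repSum L) W.2 W.1 = _
    by_cases h : rval t = W
    · have : (MonoidAlgebra.single t.a t.c • t.s) W.2 W.1 = t.c := by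
        rw [← h]
        show (MonoidAlgebra.single t.a t.c • t.s) t.w.2 (t.a * t.w.1) = t.c
        rw [smul_coeff_mul, hmon t ht, mul_one]
      rw [List.filter_cons_of_pos (by simp [h]), List.map_cons, List.sum_cons, this, hrec]
    · have : (MonoidAlgebra.single t.a t.c • t.s) W.2 W.1 = 0 := by
        by_contra h0
        rcases smul_coeff_le hmono (hG t ht) h0 with he | hlt
        · exact h ((he ▸ rfl : W = rval t).symm)
        · rcases hle t ht with he | hlt'
          · exact h he
          · exact ltXY_asymm hwo hwoY hlt hlt'
      rw [List.filter_cons_of_neg (by simp [h]), this, hrec, zero_add]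

end Rep

section ExistsRep
variable {lt : FreeMonoid X → FreeMonoid X → Prop} {ltY : Y → Y → Prop}

/-- Distribute a coefficient `c ∈ k⟨X⟩` over a representation term. -/
noncomputable def mulList (c : FreeAssocAlg k X) (t : RTerm k X Y) : List (RTerm k X Y) :=
  c.coeff.support.toList.map fun u => ⟨c u * t.c, u * t.a, t.s, t.w⟩

theorem repSum_mulList (c : FreeAssocAlg k X) (t : RTerm k X Y) :
    repSum (mulList c t) = c • (MonoidAlgebra.single t.a t.c • t.s) := by
  rw [← mul_smul]
  have hc : c * MonoidAlgebra.single t.a t.c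
      = ∑ u ∈ c.coeff.support, MonoidAlgebra.single (u * t.a) (c u * t.c) := by
    conv_lhs => rw [← MonoidAlgebra.sum_coeff_single c]
    rw [Finsupp.sum, Finset.sum_mul]
    exact Finset.sum_congr rfl fun u _ => MonoidAlgebra.single_mul_single ..
  rw [hc, Finset.sum_smul, repSum]
  unfold mulList
  rw [List.map_map]
  exact Finset.sum_map_toList _ _

theorem repSum_flatMap (c : FreeAssocAlg k X) (L : List (RTerm k X Y)) :
    repSum (L.flatMap (mulList c)) = c • repSum L := by
  induction L with
  | nil => simp [repSum]
  | cons t L ih =>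
    rw [List.flatMap_cons, repSum_append, repSum_cons, smul_add, repSum_mulList, ih]

theorem exists_rep {S : Set (FreeMod k X Y)}
    (hld : ∀ s ∈ S, ∃ w, LeadTerm lt ltY s w) {f : FreeMod k X Y}
    (hf : f ∈ Submodule.span (FreeAssocAlg k X) S) :
    ∃ L : List (RTerm k X Y), (∀ t ∈ L, t.s ∈ S ∧ LeadTerm lt ltY t.s t.w) ∧ repSum L = f := by
  refine Submodule.span_induction ?_ ?_ ?_ ?_ hf
  · intro x hx
    rcases hld x hx with ⟨w, hw⟩
    refine ⟨[⟨1, 1, x, w⟩], by simpa using ⟨hx, hw⟩, ?_⟩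
    rw [repSum_cons, repSum_nil, add_zero]
    show MonoidAlgebra.single (1 : FreeMonoid X) (1 : k) • x = x
    rw [← MonoidAlgebra.one_def, one_smul]
  · exact ⟨[], by simp, rfl⟩
  · rintro x y _ _ ⟨L₁, hL₁, rfl⟩ ⟨L₂, hL₂, rfl⟩
    exact ⟨L₁ ++ L₂, fun t ht => (List.mem_append.mp ht).elim (hL₁ t) (hL₂ t),
      repSum_append L₁ L₂⟩
  · rintro c x _ ⟨L, hL, rfl⟩
    refine ⟨L.flatMap (mulList c), ?_, ?_⟩
    · intro t ht
      rcases List.mem_flatMap.mp ht with ⟨t', ht', htm⟩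
      rcases List.mem_map.mp htm with ⟨u, _, rfl⟩
      exact hL t' ht'
    · exact repSum_flatMap c L

end ExistsRep

section Swap
variable {lt : FreeMonoid X → FreeMonoid X → Prop} {ltY : Y → Y → Prop}

theorem freeMonoid_mul_eq {a b u v : FreeMonoid X} (h : a * u = b * v) :
    (∃ c, a = b * c ∧ v = c * u) ∨ (∃ c, b = a * c ∧ u = c * v) := by
  have h' : a.toList ++ u.toList = b.toList ++ v.toList := by
    rw [← FreeMonoid.toList_mul, ← FreeMonoid.toList_mul, h]
  rcases List.append_eq_append_iff.mp h' with ⟨e, he1, he2⟩ | ⟨e, he1, he2⟩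
  · right
    refine ⟨FreeMonoid.ofList e, ?_, ?_⟩
    · apply FreeMonoid.toList.injective
      rw [FreeMonoid.toList_mul, FreeMonoid.toList_ofList, ← he1]
    · apply FreeMonoid.toList.injective
      rw [FreeMonoid.toList_mul, FreeMonoid.toList_ofList, ← he2]
  · left
    refine ⟨FreeMonoid.ofList e, ?_, ?_⟩
    · apply FreeMonoid.toList.injective
      rw [FreeMonoid.toList_mul, FreeMonoid.toList_ofList, ← he1]
    · apply FreeMonoid.toList.injective
      rw [FreeMonoid.toList_mul, FreeMonoid.toList_ofList, ← he2]

theorem single_smul_smul (a b : FreeMonoid X) (α β : k) (s : FreeMod k X Y) :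
    MonoidAlgebra.single a α • MonoidAlgebra.single b β • s
      = MonoidAlgebra.single (a * b) (α * β) • s := by
  rw [← mul_smul, MonoidAlgebra.single_mul_single]

/-- One rewriting step using a composition: two terms with the same value `W`
can be replaced by one term of value `W` plus terms of smaller value. -/
theorem swap_step (hwo : IsWellOrder (FreeMonoid X) lt) (hwoY : IsWellOrder Y ltY)
    (hmono : ∀ u v a b : FreeMonoid X, lt u v → lt (a * u * b) (a * v * b))
    {S : Set (FreeMod k X Y)} (hgs : IsGSBasisMod lt ltY S)
    {t₀ t₁ : RTerm k X Y} (h₀S : t₀.s ∈ S) (h₁S : t₁.s ∈ S)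
    (h₀ : LeadTerm lt ltY t₀.s t₀.w) (h₁ : LeadTerm lt ltY t₁.s t₁.w)
    {W : FreeMonoid X × Y} (hv₀ : rval t₀ = W) (hv₁ : rval t₁ = W)
    (hc : ∃ c, t₀.a = t₁.a * c) :
    ∃ (u : RTerm k X Y) (M : List (RTerm k X Y)),
      (u.s ∈ S ∧ LeadTerm lt ltY u.s u.w) ∧
      (∀ t ∈ M, t.s ∈ S ∧ LeadTerm lt ltY t.s t.w) ∧
      repSum (u :: M) = MonoidAlgebra.single t₀.a t₀.c • t₀.s
        + MonoidAlgebra.single t₁.a t₁.c • t₁.s ∧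
      rval u = W ∧ (∀ t ∈ M, LtXY lt ltY (rval t) W) := by
  rcases hc with ⟨c, hac⟩
  -- from rval t₀ = rval t₁ : t₁.a * (c * t₀.w.1) = t₁.a * t₁.w.1 and snds equal
  have hW : (t₀.a * t₀.w.1, t₀.w.2) = ((t₁.a * t₁.w.1, t₁.w.2) : FreeMonoid X × Y) := by
    rw [show (t₀.a * t₀.w.1, t₀.w.2) = rval t₀ from rfl, hv₀,
      show (t₁.a * t₁.w.1, t₁.w.2) = rval t₁ from rfl, hv₁]
  have h2 : t₀.w.2 = t₁.w.2 := by
    have := congrArg Prod.snd hW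
    simpa using this
  have h1 : t₁.w.1 = c * t₀.w.1 := by
    have := congrArg Prod.fst hW
    simp only at this
    rw [hac, mul_assoc] at this
    exact (mul_left_cancel this).symm
  -- composition: t₁.s - single c 1 • t₀.s is trivial mod t₁.w
  have hcomp := hgs t₁.s h₁S t₀.s h₀S t₁.w t₀.w c h₁ h₀ (by
    rcases ht1 : t₁.w with ⟨wa, wb⟩
    rw [ht1] at h1 h2
    simp only at h1 h2
    simp [h1, ← h2])
  rcases hcomp with ⟨n, α, a, s, ws, hsS, hws, heq, hlt⟩
  refine ⟨⟨t₀.c + t₁.c, t₀.a, t₀.s, t₀.w⟩,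
    List.ofFn (fun i => ⟨t₁.c * α i, t₁.a * a i, s i, ws i⟩), ⟨h₀S, h₀⟩, ?_, ?_, ?_, ?_⟩
  · intro t ht
    rcases List.mem_ofFn.mp ht with ⟨i, rfl⟩
    exact ⟨hsS i, hws i⟩
  · -- sum identity
    rw [repSum_cons]
    have hM : repSum (List.ofFn (fun i => (⟨t₁.c * α i, t₁.a * a i, s i, ws i⟩ : RTerm k X Y)))
        = MonoidAlgebra.single t₁.a t₁.c •
            (t₁.s - MonoidAlgebra.single c (1 : k) • t₀.s) := by
      rw [heq, repSum, List.map_ofFn, List.sum_ofFn, Finset.smul_sum]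
      refine Finset.sum_congr rfl fun i _ => ?_
      show MonoidAlgebra.single (t₁.a * a i) (t₁.c * α i) • s i = _
      rw [single_smul_smul]
    rw [hM, smul_sub, single_smul_smul, mul_one, ← hac]
    show MonoidAlgebra.single t₀.a (t₀.c + t₁.c) • t₀.s
        + (MonoidAlgebra.single t₁.a t₁.c • t₁.s - MonoidAlgebra.single t₀.a t₁.c • t₀.s) = _
    rw [show MonoidAlgebra.single t₀.a (t₀.c + t₁.c) = MonoidAlgebra.single t₀.a t₀.c
        + MonoidAlgebra.single t₀.a t₁.c from MonoidAlgebra.single_add _ _ _, add_smul]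
    abel
  · exact hv₀
  · intro t ht
    rcases List.mem_ofFn.mp ht with ⟨i, rfl⟩
    have := ltXY_mul (ltY := ltY) hmono t₁.a (hlt i)
    show LtXY lt ltY (t₁.a * a i * (ws i).1, (ws i).2) W
    rw [← hv₁]
    show LtXY lt ltY (t₁.a * a i * (ws i).1, (ws i).2) (rval t₁)
    rcases this with h | ⟨he, h2'⟩
    · left; rwa [mul_assoc]
    · right; constructor
      · rw [mul_assoc]; exact he
      · exact h2'

end Swap

section Main
variable {lt : FreeMonoid X → FreeMonoid X → Prop} {ltY : Y → Y → Prop}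

open Classical in
theorem gs_main (hwo : IsWellOrder (FreeMonoid X) lt) (hwoY : IsWellOrder Y ltY)
    (hmono : ∀ u v a b : FreeMonoid X, lt u v → lt (a * u * b) (a * v * b))
    {S : Set (FreeMod k X Y)} (hgs : IsGSBasisMod lt ltY S)
    (hmonw : ∀ t : RTerm k X Y, t.s ∈ S → LeadTerm lt ltY t.s t.w → t.s t.w.2 t.w.1 = 1) :
    ∀ (P : (FreeMonoid X × Y) × ℕ) (L : List (RTerm k X Y)),
      (∀ t ∈ L, t.s ∈ S ∧ LeadTerm lt ltY t.s t.w) →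
      (∀ t ∈ L, rval t = P.1 ∨ LtXY lt ltY (rval t) P.1) →
      L.countP (fun t => rval t = P.1) ≤ P.2 →
      repSum L ≠ 0 →
      ∃ (a' : FreeMonoid X) (ws wf : FreeMonoid X × Y) (s' : FreeMod k X Y),
        s' ∈ S ∧ LeadTerm lt ltY s' ws ∧ LeadTerm lt ltY (repSum L) wf
          ∧ wf = (a' * ws.1, ws.2) := by
  have sto := ltXY_sto hwo hwoY
  have htr : ∀ {p q r}, LtXY lt ltY p q → LtXY lt ltY q r → LtXY lt ltY p r :=
    fun h h' => sto.toIsStrictOrder.toIsTrans.trans _ _ _ h h'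
  have hirr : ∀ p, ¬ LtXY lt ltY p p := fun p => sto.toIsStrictOrder.toIrrefl.irrefl p
  have hwf : WellFounded (Prod.Lex (LtXY lt ltY) (Nat.lt)) :=
    (ltXY_wf hwo hwoY).prod_lex (Nat.lt_wfRel.wf)
  intro P
  induction P using hwf.induction with
  | _ P ih =>
  obtain ⟨W, m⟩ := P
  intro L hG hle hcount hne
  simp only at hle hcount ⊢
  by_cases hc : (repSum L) W.2 W.1 ≠ 0
  · -- W is the leading term of repSum L
    have hlead : LeadTerm lt ltY (repSum L) W := by
      refine ⟨hc, fun q hq hne' => ?_⟩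
      rcases repSum_supp hmono (fun t ht => (hG t ht).2) hq with ⟨t, ht, heq | hlt⟩
      · rcases hle t ht with he | hl
        · exact absurd (heq.trans he) hne'
        · exact heq ▸ hl
      · rcases hle t ht with he | hl
        · exact he ▸ hlt
        · exact htr hlt hl
    rcases repSum_supp hmono (fun t ht => (hG t ht).2) hc with ⟨t, ht, heq | hlt⟩
    · exact ⟨t.a, t.w, W, t.s, (hG t ht).1, (hG t ht).2, hlead, heq⟩
    · exfalso
      rcases hle t ht with he | hl
      · exact hirr W (he ▸ hlt)
      · exact hirr W (htr hlt hl)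
  · push_neg at hc
    by_cases hex : ∃ t₀ ∈ L, rval t₀ = W
    · rcases hex with ⟨t₀, ht₀, hv₀⟩
      rcases List.append_of_mem ht₀ with ⟨L₁, L₂, rfl⟩
      set L := L₁ ++ t₀ :: L₂ with hLdef
      have hmemL : ∀ t ∈ L₁ ++ L₂, t ∈ L := by
        intro t ht
        rcases List.mem_append.mp ht with h | h
        · exact List.mem_append.mpr (Or.inl h)
        · exact List.mem_append.mpr (Or.inr (List.mem_cons_of_mem _ h))
      have hsum : repSum L = MonoidAlgebra.single t₀.a t₀.c • t₀.s + repSum (L₁ ++ L₂) := by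
        rw [hLdef, repSum_append, repSum_cons, repSum_append]; abel
      have hcountL : L.countP (fun t => rval t = W)
          = (L₁ ++ L₂).countP (fun t => rval t = W) + 1 := by
        rw [hLdef]
        rw [List.countP_append, List.countP_cons, List.countP_append]
        simp [hv₀]
        ring
      by_cases hex2 : ∃ t₁ ∈ L₁ ++ L₂, rval t₁ = W
      · rcases hex2 with ⟨t₁, ht₁, hv₁⟩
        rcases List.append_of_mem ht₁ with ⟨M₁, M₂, hM⟩
        have hmemM : ∀ t ∈ M₁ ++ M₂, t ∈ L := by
          intro t ht
          apply hmemL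
          rw [hM]
          rcases List.mem_append.mp ht with h | h
          · exact List.mem_append.mpr (Or.inl h)
          · exact List.mem_append.mpr (Or.inr (List.mem_cons_of_mem _ h))
        have hsum2 : repSum (L₁ ++ L₂)
            = MonoidAlgebra.single t₁.a t₁.c • t₁.s + repSum (M₁ ++ M₂) := by
          rw [hM, repSum_append, repSum_cons, repSum_append]; abel
        have hcount2 : (L₁ ++ L₂).countP (fun t => rval t = W)
            = (M₁ ++ M₂).countP (fun t => rval t = W) + 1 := by
          rw [hM, List.countP_append, List.countP_cons, List.countP_append]
          simp [hv₁]
          ring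
        have hG₀ := hG t₀ ht₀
        have hG₁ := hG t₁ (hmemL t₁ ht₁)
        have hfac := freeMonoid_mul_eq
          (congrArg Prod.fst (hv₀.trans hv₁.symm) : t₀.a * t₀.w.1 = t₁.a * t₁.w.1)
        have hswap : ∃ (u : RTerm k X Y) (M : List (RTerm k X Y)),
            (u.s ∈ S ∧ LeadTerm lt ltY u.s u.w) ∧
            (∀ t ∈ M, t.s ∈ S ∧ LeadTerm lt ltY t.s t.w) ∧
            repSum (u :: M) = MonoidAlgebra.single t₀.a t₀.c • t₀.s
              + MonoidAlgebra.single t₁.a t₁.c • t₁.s ∧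
            rval u = W ∧ (∀ t ∈ M, LtXY lt ltY (rval t) W) := by
          rcases hfac with ⟨c, hc1, _⟩ | ⟨c, hc1, _⟩
          · exact swap_step hwo hwoY hmono hgs hG₀.1 hG₁.1 hG₀.2 hG₁.2 hv₀ hv₁ ⟨c, hc1⟩
          · rcases swap_step hwo hwoY hmono hgs hG₁.1 hG₀.1 hG₁.2 hG₀.2 hv₁ hv₀ ⟨c, hc1⟩
              with ⟨u, M, h1, h2, h3, h4, h5⟩
            exact ⟨u, M, h1, h2, by rw [h3]; abel, h4, h5⟩
        rcases hswap with ⟨u, M, hu, hMg, hMsum, huv, hMlt⟩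
        set Lnew := u :: (M ++ (M₁ ++ M₂)) with hLnew
        have hrepeq : repSum Lnew = repSum L := by
          have h' : MonoidAlgebra.single u.a u.c • u.s + repSum M
              = MonoidAlgebra.single t₀.a t₀.c • t₀.s
                + MonoidAlgebra.single t₁.a t₁.c • t₁.s := by
            rw [← repSum_cons]; exact hMsum
          rw [hLnew, repSum_cons, repSum_append, hsum, hsum2, ← add_assoc, h']
          abel
        have hGnew : ∀ t ∈ Lnew, t.s ∈ S ∧ LeadTerm lt ltY t.s t.w := by
          intro t ht
          rcases List.mem_cons.mp ht with rfl | ht'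
          · exact hu
          · rcases List.mem_append.mp ht' with h | h
            · exact hMg t h
            · exact hG t (hmemM t h)
        have hlenew : ∀ t ∈ Lnew, rval t = W ∨ LtXY lt ltY (rval t) W := by
          intro t ht
          rcases List.mem_cons.mp ht with rfl | ht'
          · exact Or.inl huv
          · rcases List.mem_append.mp ht' with h | h
            · exact Or.inr (hMlt t h)
            · exact hle t (hmemM t h)
        have hcM : M.countP (fun t => rval t = W) = 0 := by
          rw [List.countP_eq_zero]
          intro t ht
          simp only [decide_eq_true_eq]
          intro h
          exact hirr W (h ▸ hMlt t ht)
        have hcnew : Lnew.countP (fun t => rval t = W) + 1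
            = L.countP (fun t => rval t = W) := by
          rw [hLnew, List.countP_cons, List.countP_append, hcM, hcountL, hcount2]
          simp [huv]
        have hm1 : 1 ≤ m := le_trans (by omega) hcount
        have := ih (W, m - 1) (Prod.Lex.right W (by show m - 1 < m; omega)) Lnew hGnew hlenew
          (by show Lnew.countP (fun t => rval t = W) ≤ m - 1; omega)
          (by rw [hrepeq]; exact hne)
        rwa [hrepeq] at this
      · -- only one term of value W; its coefficient must vanish
        have hflt : (L₁ ++ L₂).filter (fun t => rval t = W) = [] := by
          rw [List.filter_eq_nil_iff]
          intro t ht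
          simp only [decide_eq_true_eq]
          exact fun h => hex2 ⟨t, ht, h⟩
        have hcL' : (repSum (L₁ ++ L₂)) W.2 W.1 = 0 := by
          rw [repSum_coeff hwo hwoY hmono (fun t ht => (hG t (hmemL t ht)).2)
            (fun t ht => hmonw t (hG t (hmemL t ht)).1 (hG t (hmemL t ht)).2)
            (fun t ht => hle t (hmemL t ht)), hflt]
          simp
        have hcT : (MonoidAlgebra.single t₀.a t₀.c • t₀.s) W.2 W.1 = t₀.c := by
          rw [← hv₀]
          show (MonoidAlgebra.single t₀.a t₀.c • t₀.s) t₀.w.2 (t₀.a * t₀.w.1) = t₀.c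
          rw [smul_coeff_mul, hmonw t₀ (hG t₀ ht₀).1 (hG t₀ ht₀).2, mul_one]
        have hc0 : t₀.c = 0 := by
          have := hc
          rw [hsum] at this
          have h2 : (MonoidAlgebra.single t₀.a t₀.c • t₀.s) W.2 W.1
              + (repSum (L₁ ++ L₂)) W.2 W.1 = 0 := this
          rw [hcT, hcL', add_zero] at h2
          exact h2
        have hrepeq : repSum (L₁ ++ L₂) = repSum L := by
          rw [hsum, hc0]
          simp [MonoidAlgebra.single_zero]
        have hm1 : 1 ≤ m := le_trans (by omega) hcount
        have := ih (W, m - 1) (Prod.Lex.right W (by show m - 1 < m; omega)) (L₁ ++ L₂)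
          (fun t ht => hG t (hmemL t ht)) (fun t ht => hle t (hmemL t ht))
          (by show (L₁ ++ L₂).countP (fun t => rval t = W) ≤ m - 1; omega)
          (by rw [hrepeq]; exact hne)
        rwa [hrepeq] at this
    · -- no term of value W : find the true maximum and recurse
      push_neg at hex
      have hlt' : ∀ t ∈ L, LtXY lt ltY (rval t) W := by
        intro t ht
        rcases hle t ht with he | hl
        · exact absurd he (hex t ht)
        · exact hl
      have hLne : L ≠ [] := by
        intro h
        exact hne (by rw [h, repSum_nil])
      have hfs : ((L.map rval).toFinset).Nonempty := by
        rcases List.exists_mem_of_ne_nil L hLne with ⟨t, ht⟩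
        exact ⟨rval t, List.mem_toFinset.mpr (List.mem_map.mpr ⟨t, ht, rfl⟩)⟩
      rcases finset_exists_max' sto hfs with ⟨W', hW'mem, hmax⟩
      rcases List.mem_map.mp (List.mem_toFinset.mp hW'mem) with ⟨t', ht', hvt'⟩
      have hW'lt : LtXY lt ltY W' W := hvt' ▸ hlt' t' ht'
      exact ih (W', L.length) (Prod.Lex.left _ _ hW'lt) L hG
        (fun t ht => by
          by_cases h : rval t = W'
          · exact Or.inl h
          · exact Or.inr (hmax _ (List.mem_toFinset.mpr (List.mem_map.mpr ⟨t, ht, rfl⟩)) h))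
        List.countP_le_length hne

end Main

section Wrap
variable {lt : FreeMonoid X → FreeMonoid X → Prop} {ltY : Y → Y → Prop}

/-- A strictly decreasing representation with nonzero coefficients and monic `sᵢ`
has leading term `a₀·w₀` with coefficient `α₀`. -/
theorem rep_leadTerm (hwo : IsWellOrder (FreeMonoid X) lt) (hwoY : IsWellOrder Y ltY)
    (hmono : ∀ u v a b : FreeMonoid X, lt u v → lt (a * u * b) (a * v * b))
    {n : ℕ} (hn : 0 < n) {α : Fin n → k} {a : Fin n → FreeMonoid X}
    {s : Fin n → FreeMod k X Y} {ws : Fin n → FreeMonoid X × Y}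
    (hα0 : α ⟨0, hn⟩ ≠ 0)
    (hws : ∀ i, LeadTerm lt ltY (s i) (ws i))
    (hmon : ∀ i, (s i) (ws i).2 (ws i).1 = 1)
    (hdec : ∀ i j : Fin n, i < j →
      LtXY lt ltY (a j * (ws j).1, (ws j).2) (a i * (ws i).1, (ws i).2)) :
    LeadTerm lt ltY (∑ i, MonoidAlgebra.single (a i) (α i) • s i)
      (a ⟨0, hn⟩ * (ws ⟨0, hn⟩).1, (ws ⟨0, hn⟩).2) ∧
    (∑ i, MonoidAlgebra.single (a i) (α i) • s i) (ws ⟨0, hn⟩).2 (a ⟨0, hn⟩ * (ws ⟨0, hn⟩).1)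
      = α ⟨0, hn⟩ := by
  have sto := ltXY_sto hwo hwoY
  have htr : ∀ {p q r}, LtXY lt ltY p q → LtXY lt ltY q r → LtXY lt ltY p r :=
    fun h h' => sto.toIsStrictOrder.toIsTrans.trans _ _ _ h h'
  set i0 : Fin n := ⟨0, hn⟩ with hi0
  set W : FreeMonoid X × Y := (a i0 * (ws i0).1, (ws i0).2) with hW
  set F : FreeMod k X Y := ∑ i, MonoidAlgebra.single (a i) (α i) • s i with hF
  have happ : ∀ (q : FreeMonoid X × Y),
      F q.2 q.1 = ∑ i, (MonoidAlgebra.single (a i) (α i) • s i) q.2 q.1 := by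
    intro q
    rw [hF, Finsupp.finset_sum_apply, MonoidAlgebra.coeff_sum, Finsupp.finset_sum_apply]
  have hzero : ∀ (i : Fin n), i ≠ i0 →
      (MonoidAlgebra.single (a i) (α i) • s i) W.2 W.1 = 0 := by
    intro i hi
    by_contra h0
    have hlt' : LtXY lt ltY (a i * (ws i).1, (ws i).2) W := by
      apply hdec i0 i
      exact lt_of_le_of_ne (Fin.mk_le_mk.mpr (Nat.zero_le _)) (Ne.symm hi)
    rcases smul_coeff_le hmono (hws i) h0 with he | hlt
    · exact sto.toIsStrictOrder.toIrrefl.irrefl W (he ▸ hlt')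
    · exact sto.toIsStrictOrder.toIrrefl.irrefl W (htr hlt hlt')
  have hcW : F W.2 W.1 = α i0 := by
    rw [happ]
    rw [Finset.sum_eq_single_of_mem i0 (Finset.mem_univ _) (fun i _ hi => hzero i hi)]
    show (MonoidAlgebra.single (a i0) (α i0) • s i0) (ws i0).2 (a i0 * (ws i0).1) = α i0
    rw [smul_coeff_mul, hmon i0, mul_one]
  refine ⟨⟨by rw [hcW]; exact hα0, ?_⟩, hcW⟩
  intro q hq hne
  have : ∃ i, (MonoidAlgebra.single (a i) (α i) • s i) q.2 q.1 ≠ 0 := by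
    by_contra hall
    push_neg at hall
    rw [happ q] at hq
    exact hq (Finset.sum_eq_zero fun i _ => hall i)
  rcases this with ⟨i, hi⟩
  rcases smul_coeff_le hmono (hws i) hi with he | hlt
  · by_cases hii : i = i0
    · exact absurd (by rw [he, hii]) hne
    · rw [he]
      apply hdec i0 i
      exact lt_of_le_of_ne (Fin.mk_le_mk.mpr (Nat.zero_le _)) (Ne.symm hii)
  · by_cases hii : i = i0
    · rw [hii] at hlt; exact hlt
    · exact htr hlt (hdec i0 i (lt_of_le_of_ne (Fin.mk_le_mk.mpr (Nat.zero_le _)) (Ne.symm hii)))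

end Wrap

section Wrap2
variable {lt : FreeMonoid X → FreeMonoid X → Prop} {ltY : Y → Y → Prop}
variable {S : Set (FreeMod k X Y)}

theorem monic_coeff (hwo : IsWellOrder (FreeMonoid X) lt) (hwoY : IsWellOrder Y ltY)
    (hmonic : ∀ s ∈ S, IsMonicElt lt ltY s) {s : FreeMod k X Y} (hs : s ∈ S)
    {w : FreeMonoid X × Y} (hw : LeadTerm lt ltY s w) : s w.2 w.1 = 1 := by
  rcases hmonic s hs with ⟨p, hp, h1⟩
  rwa [leadTerm_unique hwo hwoY hw hp]

theorem two_of_gs (hwo : IsWellOrder (FreeMonoid X) lt) (hwoY : IsWellOrder Y ltY)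
    (hmono : ∀ u v a b : FreeMonoid X, lt u v → lt (a * u * b) (a * v * b))
    (hmonic : ∀ s ∈ S, IsMonicElt lt ltY s) (hgs : IsGSBasisMod lt ltY S) :
    ∀ f ∈ Submodule.span (FreeAssocAlg k X) S, f ≠ 0 →
      ∃ (a : FreeMonoid X) (ws wf : FreeMonoid X × Y) (s : FreeMod k X Y),
        s ∈ S ∧ LeadTerm lt ltY s ws ∧ LeadTerm lt ltY f wf ∧ wf = (a * ws.1, ws.2) := by
  intro f hf hfne
  classical
  have hld : ∀ s ∈ S, ∃ w, LeadTerm lt ltY s w := fun s hs =>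
    (hmonic s hs).elim fun p hp => ⟨p, hp.1⟩
  have hmonw : ∀ t : RTerm k X Y, t.s ∈ S → LeadTerm lt ltY t.s t.w → t.s t.w.2 t.w.1 = 1 :=
    fun t hs hw => monic_coeff hwo hwoY hmonic hs hw
  rcases exists_rep hld hf with ⟨L, hLg, rfl⟩
  have hLne : L ≠ [] := fun h => hfne (by rw [h, repSum_nil])
  have hfs : ((L.map rval).toFinset).Nonempty := by
    rcases List.exists_mem_of_ne_nil L hLne with ⟨t, ht⟩
    exact ⟨rval t, List.mem_toFinset.mpr (List.mem_map.mpr ⟨t, ht, rfl⟩)⟩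
  rcases finset_exists_max' (ltXY_sto hwo hwoY) hfs with ⟨W, hWmem, hmax⟩
  rcases gs_main hwo hwoY hmono hgs hmonw (W, L.length) L hLg
    (fun t ht => by
      by_cases h : rval t = W
      · exact Or.inl h
      · exact Or.inr (hmax _ (List.mem_toFinset.mpr (List.mem_map.mpr ⟨t, ht, rfl⟩)) h))
    List.countP_le_length hfne with ⟨a, ws, wf, s, h1, h2, h3, h4⟩
  exact ⟨a, ws, wf, s, h1, h2, h3, h4⟩

theorem two'_of_two (hwo : IsWellOrder (FreeMonoid X) lt) (hwoY : IsWellOrder Y ltY)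
    (hmono : ∀ u v a b : FreeMonoid X, lt u v → lt (a * u * b) (a * v * b))
    (hmonic : ∀ s ∈ S, IsMonicElt lt ltY s)
    (h2 : ∀ f ∈ Submodule.span (FreeAssocAlg k X) S, f ≠ 0 →
      ∃ (a : FreeMonoid X) (ws wf : FreeMonoid X × Y) (s : FreeMod k X Y),
        s ∈ S ∧ LeadTerm lt ltY s ws ∧ LeadTerm lt ltY f wf ∧ wf = (a * ws.1, ws.2)) :
    ∀ f ∈ Submodule.span (FreeAssocAlg k X) S, f ≠ 0 →
      ∃ (n : ℕ) (α : Fin n → k) (a : Fin n → FreeMonoid X)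
        (s : Fin n → FreeMod k X Y) (ws : Fin n → FreeMonoid X × Y),
          (∀ i, α i ≠ 0) ∧ (∀ i, s i ∈ S) ∧ (∀ i, LeadTerm lt ltY (s i) (ws i)) ∧
          f = ∑ i, MonoidAlgebra.single (a i) (α i) • s i ∧
          ∀ i j : Fin n, i < j →
            LtXY lt ltY (a j * (ws j).1, (ws j).2) (a i * (ws i).1, (ws i).2) := by
  have sto := ltXY_sto hwo hwoY
  have htr : ∀ {p q r}, LtXY lt ltY p q → LtXY lt ltY q r → LtXY lt ltY p r :=
    fun h h' => sto.toIsStrictOrder.toIsTrans.trans _ _ _ h h'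
  -- well-founded induction on the leading term
  suffices H : ∀ (w : FreeMonoid X × Y), ∀ f ∈ Submodule.span (FreeAssocAlg k X) S, f ≠ 0 →
      LeadTerm lt ltY f w →
      ∃ (n : ℕ) (α : Fin n → k) (a : Fin n → FreeMonoid X)
        (s : Fin n → FreeMod k X Y) (ws : Fin n → FreeMonoid X × Y),
          (∀ i, α i ≠ 0) ∧ (∀ i, s i ∈ S) ∧ (∀ i, LeadTerm lt ltY (s i) (ws i)) ∧
          f = ∑ i, MonoidAlgebra.single (a i) (α i) • s i ∧
          (∀ i, (a i * (ws i).1, (ws i).2) = w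
            ∨ LtXY lt ltY (a i * (ws i).1, (ws i).2) w) ∧
          ∀ i j : Fin n, i < j →
            LtXY lt ltY (a j * (ws j).1, (ws j).2) (a i * (ws i).1, (ws i).2) by
    intro f hf hfne
    rcases exists_leadTerm hwo hwoY hfne with ⟨w, hw⟩
    rcases H w f hf hfne hw with ⟨n, α, a, s, ws, h1, h2', h3, h4, _, h6⟩
    exact ⟨n, α, a, s, ws, h1, h2', h3, h4, h6⟩
  intro w
  induction w using (ltXY_wf hwo hwoY).induction with
  | _ w ih =>
  intro f hf hfne hflead
  rcases h2 f hf hfne with ⟨a0, ws0, wf, s0, hs0S, hs0w, hfw, hwe⟩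
  have hwfw : wf = w := leadTerm_unique hwo hwoY hfw hflead
  subst hwfw
  set α0 : k := f wf.2 wf.1 with hα0
  have hα0ne : α0 ≠ 0 := hfw.1
  set g : FreeMod k X Y := f - MonoidAlgebra.single a0 α0 • s0 with hg
  have hsmem : MonoidAlgebra.single a0 α0 • s0 ∈ Submodule.span (FreeAssocAlg k X) S :=
    Submodule.smul_mem _ _ (Submodule.subset_span hs0S)
  have hgmem : g ∈ Submodule.span (FreeAssocAlg k X) S := Submodule.sub_mem _ hf hsmem
  have hsc : (MonoidAlgebra.single a0 α0 • s0) wf.2 wf.1 = α0 := by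
    rw [hwe]
    show (MonoidAlgebra.single a0 α0 • s0) ws0.2 (a0 * ws0.1) = α0
    rw [smul_coeff_mul, monic_coeff hwo hwoY hmonic hs0S hs0w, mul_one]
  have hgwf : g wf.2 wf.1 = 0 := by
    rw [hg]
    show f wf.2 wf.1 - (MonoidAlgebra.single a0 α0 • s0) wf.2 wf.1 = 0
    rw [hsc, ← hα0]
    ring
  have hgsupp : ∀ q : FreeMonoid X × Y, g q.2 q.1 ≠ 0 → LtXY lt ltY q wf := by
    intro q hq
    have hqne : q ≠ wf := fun h => hq (h ▸ hgwf)
    by_cases hfq : f q.2 q.1 ≠ 0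
    · exact hfw.2 q hfq hqne
    · push_neg at hfq
      have : (MonoidAlgebra.single a0 α0 • s0) q.2 q.1 ≠ 0 := by
        intro h0
        apply hq
        rw [hg]
        show f q.2 q.1 - (MonoidAlgebra.single a0 α0 • s0) q.2 q.1 = 0
        rw [hfq, h0, sub_zero]
      rcases smul_coeff_le hmono hs0w this with he | hlt
      · exact absurd (he.trans hwe.symm) hqne
      · exact hwe ▸ hlt
  by_cases hgz : g = 0
  · -- f is a single term
    have hfeq : f = MonoidAlgebra.single a0 α0 • s0 := by
      have := sub_eq_zero.mp (hg ▸ hgz)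
      exact this
    refine ⟨1, fun _ => α0, fun _ => a0, fun _ => s0, fun _ => ws0,
      fun _ => hα0ne, fun _ => hs0S, fun _ => hs0w, ?_, ?_, ?_⟩
    · rw [Fin.sum_univ_one, hfeq]
    · intro i; exact Or.inl hwe.symm
    · intro i j hij
      exact absurd hij (by omega)
  · rcases exists_leadTerm hwo hwoY hgz with ⟨wg, hwg⟩
    have hwglt : LtXY lt ltY wg wf := hgsupp wg hwg.1
    rcases ih wg hwglt g hgmem hgz hwg with ⟨n, α, a, s, ws, h1, h2', h3, h4, h5, h6⟩
    refine ⟨n + 1, Fin.cons α0 α, Fin.cons a0 a, Fin.cons s0 s, Fin.cons ws0 ws,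
      ?_, ?_, ?_, ?_, ?_, ?_⟩
    · intro i
      refine Fin.cases ?_ ?_ i
      · simpa using hα0ne
      · intro j; simpa using h1 j
    · intro i
      refine Fin.cases ?_ ?_ i
      · simpa using hs0S
      · intro j; simpa using h2' j
    · intro i
      refine Fin.cases ?_ ?_ i
      · simpa using hs0w
      · intro j; simpa using h3 j
    · rw [Fin.sum_univ_succ]
      simp only [Fin.cons_zero, Fin.cons_succ]
      rw [← h4, hg]
      abel
    · intro i
      refine Fin.cases ?_ ?_ i
      · left; simp [hwe.symm]
      · intro j
        right
        simp only [Fin.cons_succ]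
        rcases h5 j with he | hlt
        · exact he ▸ hwglt
        · exact htr hlt hwglt
    · intro i j hij
      have hj : j ≠ 0 := by
        intro h
        subst h
        exact absurd hij (by simp [Fin.lt_iff_val_lt_val])
      rcases Fin.eq_succ_of_ne_zero hj with ⟨j', rfl⟩
      by_cases hi0 : i = 0
      · subst hi0
        simp only [Fin.cons_zero, Fin.cons_succ]
        rw [← hwe]
        rcases h5 j' with he | hlt
        · exact he ▸ hwglt
        · exact htr hlt hwglt
      · rcases Fin.eq_succ_of_ne_zero hi0 with ⟨i', rfl⟩
        simp only [Fin.cons_succ]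
        exact h6 i' j' (by rwa [Fin.succ_lt_succ_iff] at hij)

end Wrap2

section Wrap3
variable {lt : FreeMonoid X → FreeMonoid X → Prop} {ltY : Y → Y → Prop}
variable {S : Set (FreeMod k X Y)}

theorem two_of_two' (hwo : IsWellOrder (FreeMonoid X) lt) (hwoY : IsWellOrder Y ltY)
    (hmono : ∀ u v a b : FreeMonoid X, lt u v → lt (a * u * b) (a * v * b))
    (hmonic : ∀ s ∈ S, IsMonicElt lt ltY s)
    (h2' : ∀ f ∈ Submodule.span (FreeAssocAlg k X) S, f ≠ 0 →
      ∃ (n : ℕ) (α : Fin n → k) (a : Fin n → FreeMonoid X)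
        (s : Fin n → FreeMod k X Y) (ws : Fin n → FreeMonoid X × Y),
          (∀ i, α i ≠ 0) ∧ (∀ i, s i ∈ S) ∧ (∀ i, LeadTerm lt ltY (s i) (ws i)) ∧
          f = ∑ i, MonoidAlgebra.single (a i) (α i) • s i ∧
          ∀ i j : Fin n, i < j →
            LtXY lt ltY (a j * (ws j).1, (ws j).2) (a i * (ws i).1, (ws i).2)) :
    ∀ f ∈ Submodule.span (FreeAssocAlg k X) S, f ≠ 0 →
      ∃ (a : FreeMonoid X) (ws wf : FreeMonoid X × Y) (s : FreeMod k X Y),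
        s ∈ S ∧ LeadTerm lt ltY s ws ∧ LeadTerm lt ltY f wf ∧ wf = (a * ws.1, ws.2) := by
  intro f hf hfne
  rcases h2' f hf hfne with ⟨n, α, a, s, ws, h1, h2, h3, h4, h5⟩
  have hn : 0 < n := by
    rcases Nat.eq_zero_or_pos n with rfl | h
    · exfalso; apply hfne; rw [h4]; simp
    · exact h
  have hlead := rep_leadTerm hwo hwoY hmono hn (h1 ⟨0, hn⟩) h3
    (fun i => monic_coeff hwo hwoY hmonic (h2 i) (h3 i)) h5
  exact ⟨a ⟨0, hn⟩, ws ⟨0, hn⟩, (a ⟨0, hn⟩ * (ws ⟨0, hn⟩).1, (ws ⟨0, hn⟩).2), s ⟨0, hn⟩,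
    h2 _, h3 _, h4 ▸ hlead.1, rfl⟩

theorem gs_of_two' (hwo : IsWellOrder (FreeMonoid X) lt) (hwoY : IsWellOrder Y ltY)
    (hmono : ∀ u v a b : FreeMonoid X, lt u v → lt (a * u * b) (a * v * b))
    (hmonic : ∀ s ∈ S, IsMonicElt lt ltY s)
    (h2' : ∀ f ∈ Submodule.span (FreeAssocAlg k X) S, f ≠ 0 →
      ∃ (n : ℕ) (α : Fin n → k) (a : Fin n → FreeMonoid X)
        (s : Fin n → FreeMod k X Y) (ws : Fin n → FreeMonoid X × Y),
          (∀ i, α i ≠ 0) ∧ (∀ i, s i ∈ S) ∧ (∀ i, LeadTerm lt ltY (s i) (ws i)) ∧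
          f = ∑ i, MonoidAlgebra.single (a i) (α i) • s i ∧
          ∀ i j : Fin n, i < j →
            LtXY lt ltY (a j * (ws j).1, (ws j).2) (a i * (ws i).1, (ws i).2)) :
    IsGSBasisMod lt ltY S := by
  have sto := ltXY_sto hwo hwoY
  have htr : ∀ {p q r}, LtXY lt ltY p q → LtXY lt ltY q r → LtXY lt ltY p r :=
    fun h h' => sto.toIsStrictOrder.toIsTrans.trans _ _ _ h h'
  intro f hfS g hgS wf wg a hfw hgw hcomp
  set h : FreeMod k X Y := f - MonoidAlgebra.single a (1 : k) • g with hh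
  have hmem : h ∈ Submodule.span (FreeAssocAlg k X) S :=
    Submodule.sub_mem _ (Submodule.subset_span hfS)
      (Submodule.smul_mem _ _ (Submodule.subset_span hgS))
  by_cases hz : h = 0
  · refine ⟨0, Fin.elim0, Fin.elim0, Fin.elim0, Fin.elim0, fun i => i.elim0,
      fun i => i.elim0, ?_, fun i => i.elim0⟩
    rw [hz]
    simp
  · -- every monomial of h is below wf
    have hcwf : h wf.2 wf.1 = 0 := by
      have h1 : f wf.2 wf.1 = 1 := monic_coeff hwo hwoY hmonic hfS hfw
      have h2 : (MonoidAlgebra.single a (1 : k) • g) wf.2 wf.1 = 1 := by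
        rw [hcomp]
        show (MonoidAlgebra.single a (1 : k) • g) wg.2 (a * wg.1) = 1
        rw [smul_coeff_mul, monic_coeff hwo hwoY hmonic hgS hgw, mul_one]
      show f wf.2 wf.1 - (MonoidAlgebra.single a (1 : k) • g) wf.2 wf.1 = 0
      rw [h1, h2, sub_self]
    have hsupp : ∀ q : FreeMonoid X × Y, h q.2 q.1 ≠ 0 → LtXY lt ltY q wf := by
      intro q hq
      have hqne : q ≠ wf := fun he => hq (he ▸ hcwf)
      by_cases hfq : f q.2 q.1 ≠ 0
      · exact hfw.2 q hfq hqne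
      · push_neg at hfq
        have hgq : (MonoidAlgebra.single a (1 : k) • g) q.2 q.1 ≠ 0 := by
          intro h0
          apply hq
          show f q.2 q.1 - (MonoidAlgebra.single a (1 : k) • g) q.2 q.1 = 0
          rw [hfq, h0, sub_zero]
        rcases smul_coeff_le hmono hgw hgq with he | hlt
        · exact absurd (he.trans hcomp.symm) hqne
        · exact hcomp ▸ hlt
    rcases h2' h hmem hz with ⟨n, α, a', s', ws', h1, h2, h3, h4, h5⟩
    have hn : 0 < n := by
      rcases Nat.eq_zero_or_pos n with rfl | hp
      · exfalso; apply hz; rw [h4]; simp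
      · exact hp
    have hlead := rep_leadTerm hwo hwoY hmono hn (h1 ⟨0, hn⟩) h3
      (fun i => monic_coeff hwo hwoY hmonic (h2 i) (h3 i)) h5
    have htop : LtXY lt ltY (a' ⟨0, hn⟩ * (ws' ⟨0, hn⟩).1, (ws' ⟨0, hn⟩).2) wf := by
      apply hsupp
      show h ((ws' ⟨0, hn⟩).2) (a' ⟨0, hn⟩ * (ws' ⟨0, hn⟩).1) ≠ 0
      rw [h4]
      rw [hlead.2]
      exact h1 _
    refine ⟨n, α, a', s', ws', h2, h3, h4, ?_⟩
    intro i
    by_cases hi : i = ⟨0, hn⟩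
    · rw [hi]; exact htop
    · have : LtXY lt ltY (a' i * (ws' i).1, (ws' i).2)
          (a' ⟨0, hn⟩ * (ws' ⟨0, hn⟩).1, (ws' ⟨0, hn⟩).2) :=
        h5 ⟨0, hn⟩ i (lt_of_le_of_ne (Fin.mk_le_mk.mpr (Nat.zero_le _)) (Ne.symm hi))
      exact htr this htop

end Wrap3

section Part3
variable {lt : FreeMonoid X → FreeMonoid X → Prop} {ltY : Y → Y → Prop}
variable {S : Set (FreeMod k X Y)}

/-- `w` is reduced with respect to `S`. -/
def RedW (lt : FreeMonoid X → FreeMonoid X → Prop) (ltY : Y → Y → Prop)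
    (S : Set (FreeMod k X Y)) (w : FreeMonoid X × Y) : Prop :=
  ∀ (a : FreeMonoid X) (ws : FreeMonoid X × Y) (s : FreeMod k X Y),
    s ∈ S → LeadTerm lt ltY s ws → w ≠ (a * ws.1, ws.2)

theorem exists_reduction (hwo : IsWellOrder (FreeMonoid X) lt) (hwoY : IsWellOrder Y ltY)
    (hmono : ∀ u v a b : FreeMonoid X, lt u v → lt (a * u * b) (a * v * b))
    (hmonic : ∀ s ∈ S, IsMonicElt lt ltY s) :
    ∀ w : FreeMonoid X × Y, ∃ r : FreeMod k X Y,
      monoM w - r ∈ Submodule.span (FreeAssocAlg k X) S ∧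
      (∀ q, r q.2 q.1 ≠ 0 → RedW lt ltY S q) ∧
      (∀ q, r q.2 q.1 ≠ 0 → q = w ∨ LtXY lt ltY q w) ∧
      (RedW lt ltY S w → r = monoM w) := by
  classical
  have sto := ltXY_sto hwo hwoY
  have htr : ∀ {p q r}, LtXY lt ltY p q → LtXY lt ltY q r → LtXY lt ltY p r :=
    fun h h' => sto.toIsStrictOrder.toIsTrans.trans _ _ _ h h'
  intro w
  induction w using (ltXY_wf hwo hwoY).induction with
  | _ w ih =>
  by_cases hred : RedW lt ltY S w
  · refine ⟨monoM w, by rw [sub_self]; exact Submodule.zero_mem _, ?_, ?_, fun _ => rfl⟩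
    · intro q hq
      have := monoM_coeff (k := k) w q
      rw [this] at hq
      by_cases h : q = w
      · exact h ▸ hred
      · simp [h] at hq
    · intro q hq
      have := monoM_coeff (k := k) w q
      rw [this] at hq
      by_cases h : q = w
      · exact Or.inl h
      · simp [h] at hq
  · rw [RedW] at hred
    push_neg at hred
    rcases hred with ⟨a, ws, s, hsS, hsw, hwe⟩
    set g : FreeMod k X Y := monoM w - MonoidAlgebra.single a (1 : k) • s with hg
    have hgsupp : ∀ q : FreeMonoid X × Y, g q.2 q.1 ≠ 0 → LtXY lt ltY q w := by
      intro q hq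
      have hcw : g w.2 w.1 = 0 := by
        have h1 : (monoM (k := k) w) w.2 w.1 = 1 := by rw [monoM_coeff]; simp
        have h2 : (MonoidAlgebra.single a (1 : k) • s) w.2 w.1 = 1 := by
          rw [hwe]
          show (MonoidAlgebra.single a (1 : k) • s) ws.2 (a * ws.1) = 1
          rw [smul_coeff_mul, monic_coeff hwo hwoY hmonic hsS hsw, mul_one]
        show (monoM (k := k) w) w.2 w.1 - (MonoidAlgebra.single a (1 : k) • s) w.2 w.1 = 0
        rw [h1, h2, sub_self]
      have hqne : q ≠ w := fun he => hq (he ▸ hcw)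
      have hmq : (monoM (k := k) w) q.2 q.1 = 0 := by
        rw [monoM_coeff]; simp [hqne]
      have hsq : (MonoidAlgebra.single a (1 : k) • s) q.2 q.1 ≠ 0 := by
        intro h0
        apply hq
        show (monoM (k := k) w) q.2 q.1 - (MonoidAlgebra.single a (1 : k) • s) q.2 q.1 = 0
        rw [hmq, h0, sub_zero]
      rcases smul_coeff_le hmono hsw hsq with he | hlt
      · exact absurd (he.trans hwe.symm) hqne
      · exact hwe ▸ hlt
    -- reduce each monomial of g
    set r : FreeMod k X Y := ∑ q ∈ suppF g,
      if hq : LtXY lt ltY q w then (g q.2 q.1) • Classical.choose (ih q hq) else 0 with hr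
    have hrprop : ∀ q ∈ suppF g, ∀ (hq : LtXY lt ltY q w),
        monoM q - Classical.choose (ih q hq) ∈ Submodule.span (FreeAssocAlg k X) S ∧
        (∀ p, (Classical.choose (ih q hq)) p.2 p.1 ≠ 0 → RedW lt ltY S p) ∧
        (∀ p, (Classical.choose (ih q hq)) p.2 p.1 ≠ 0 → p = q ∨ LtXY lt ltY p q) :=
      fun q _ hq => ⟨(Classical.choose_spec (ih q hq)).1,
        (Classical.choose_spec (ih q hq)).2.1, (Classical.choose_spec (ih q hq)).2.2.1⟩
    have hsum : ∀ q ∈ suppF g, (g q.2 q.1) • monoM (k := k) q -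
        (if hq : LtXY lt ltY q w then (g q.2 q.1) • Classical.choose (ih q hq) else 0)
          ∈ Submodule.span (FreeAssocAlg k X) S := by
      intro q hqmem
      have hq : LtXY lt ltY q w := hgsupp q (mem_suppF.mp hqmem)
      rw [dif_pos hq, ← smul_sub]
      exact Submodule.smul_of_tower_mem _ _ ((hrprop q hqmem hq).1)
    have hgr : g - r ∈ Submodule.span (FreeAssocAlg k X) S := by
      have hEq : g - r = ∑ q ∈ suppF g, ((g q.2 q.1) • monoM (k := k) q -
          (if hq : LtXY lt ltY q w then (g q.2 q.1) • Classical.choose (ih q hq) else 0)) := by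
        rw [Finset.sum_sub_distrib, ← hr, ← eq_sum_monoM g]
      rw [hEq]
      exact Submodule.sum_mem _ (fun q hq => hsum q hq)
    refine ⟨r, ?_, ?_, ?_, ?_⟩
    · have h1 : monoM (k := k) w - g ∈ Submodule.span (FreeAssocAlg k X) S := by
        rw [hg]
        have : monoM (k := k) w - (monoM w - MonoidAlgebra.single a (1 : k) • s)
            = MonoidAlgebra.single a (1 : k) • s := by abel
        rw [this]
        exact Submodule.smul_mem _ _ (Submodule.subset_span hsS)
      have := Submodule.add_mem _ h1 hgr
      have he : monoM (k := k) w - g + (g - r) = monoM w - r := by abel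
      rwa [he] at this
    · intro p hp
      have : ∃ q ∈ suppF g, ((if hq : LtXY lt ltY q w then
          (g q.2 q.1) • Classical.choose (ih q hq) else 0) : FreeMod k X Y) p.2 p.1 ≠ 0 := by
        by_contra hall
        push_neg at hall
        apply hp
        rw [hr, Finsupp.finset_sum_apply, MonoidAlgebra.coeff_sum, Finsupp.finset_sum_apply]
        exact Finset.sum_eq_zero (fun q hq => hall q hq)
      rcases this with ⟨q, hqmem, hqne⟩
      have hq : LtXY lt ltY q w := hgsupp q (mem_suppF.mp hqmem)
      rw [dif_pos hq] at hqne
      have : (Classical.choose (ih q hq)) p.2 p.1 ≠ 0 := by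
        intro h0
        apply hqne
        show (g q.2 q.1) • (Classical.choose (ih q hq)) p.2 p.1 = 0
        rw [h0, smul_zero]
      exact (hrprop q hqmem hq).2.1 p this
    · intro p hp
      right
      have : ∃ q ∈ suppF g, ((if hq : LtXY lt ltY q w then
          (g q.2 q.1) • Classical.choose (ih q hq) else 0) : FreeMod k X Y) p.2 p.1 ≠ 0 := by
        by_contra hall
        push_neg at hall
        apply hp
        rw [hr, Finsupp.finset_sum_apply, MonoidAlgebra.coeff_sum, Finsupp.finset_sum_apply]
        exact Finset.sum_eq_zero (fun q hq => hall q hq)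
      rcases this with ⟨q, hqmem, hqne⟩
      have hq : LtXY lt ltY q w := hgsupp q (mem_suppF.mp hqmem)
      rw [dif_pos hq] at hqne
      have : (Classical.choose (ih q hq)) p.2 p.1 ≠ 0 := by
        intro h0
        apply hqne
        show (g q.2 q.1) • (Classical.choose (ih q hq)) p.2 p.1 = 0
        rw [h0, smul_zero]
      rcases (hrprop q hqmem hq).2.2 p this with he | hlt
      · exact he ▸ hq
      · exact htr hlt hq
    · intro hredw
      exfalso
      exact hredw a ws s hsS hsw hwe

end Part3

section Part3b
variable {lt : FreeMonoid X → FreeMonoid X → Prop} {ltY : Y → Y → Prop}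
variable {S : Set (FreeMod k X Y)}

theorem span_red_top (hwo : IsWellOrder (FreeMonoid X) lt) (hwoY : IsWellOrder Y ltY)
    (hmono : ∀ u v a b : FreeMonoid X, lt u v → lt (a * u * b) (a * v * b))
    (hmonic : ∀ s ∈ S, IsMonicElt lt ltY s) :
    Submodule.span k (Set.range (fun w : {w : FreeMonoid X × Y // RedW lt ltY S w} =>
      Submodule.Quotient.mk (p := Submodule.span (FreeAssocAlg k X) S) (monoM w.val))) = ⊤ := by
  classical
  choose r hr1 hr2 hr3 hr4 using exists_reduction hwo hwoY hmono hmonic (S := S)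
  rw [eq_top_iff]
  rintro x -
  obtain ⟨f, rfl⟩ := Submodule.Quotient.mk_surjective _ x
  set Sp := Submodule.span (FreeAssocAlg k X) S
  have hmk_sum : ∀ (t : Finset (FreeMonoid X × Y)) (c : (FreeMonoid X × Y) → k)
      (m : (FreeMonoid X × Y) → FreeMod k X Y),
      (Submodule.Quotient.mk (p := Sp) (∑ q ∈ t, c q • m q))
        = ∑ q ∈ t, c q • Submodule.Quotient.mk (p := Sp) (m q) := by
    intro t c m
    induction t using Finset.induction with
    | empty => simp
    | insert _ _ hq ih =>
      rw [Finset.sum_insert hq, Finset.sum_insert hq, ← ih]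
      rw [Submodule.Quotient.mk_add, Submodule.Quotient.mk_smul]
  have hmono_mem : ∀ q : FreeMonoid X × Y,
      Submodule.Quotient.mk (p := Sp) (monoM q) ∈ Submodule.span k
        (Set.range (fun w : {w : FreeMonoid X × Y // RedW lt ltY S w} =>
          Submodule.Quotient.mk (p := Sp) (monoM w.val))) := by
    intro q
    have hq0 : Submodule.Quotient.mk (p := Sp) (monoM (k := k) q)
        = Submodule.Quotient.mk (p := Sp) (r q) := by
      rw [← sub_eq_zero, ← Submodule.Quotient.mk_sub]
      exact (Submodule.Quotient.mk_eq_zero _).mpr (hr1 q)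
    rw [hq0, eq_sum_monoM (r q), hmk_sum]
    apply Submodule.sum_mem
    intro p hp
    apply Submodule.smul_mem
    apply Submodule.subset_span
    exact ⟨⟨p, hr2 q p (mem_suppF.mp hp)⟩, rfl⟩
  rw [eq_sum_monoM f, hmk_sum]
  exact Submodule.sum_mem _ (fun q _ => Submodule.smul_mem _ _ (hmono_mem q))

theorem mk_sum_smul {ι : Type*} (Sp : Submodule (FreeAssocAlg k X) (FreeMod k X Y))
    (t : Finset ι) (c : ι → k) (m : ι → FreeMod k X Y) :
    Submodule.Quotient.mk (p := Sp) (∑ j ∈ t, c j • m j)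
      = ∑ j ∈ t, c j • Submodule.Quotient.mk (p := Sp) (m j) := by
  classical
  induction t using Finset.induction with
  | empty => simp
  | insert _ _ hq ih =>
    rw [Finset.sum_insert hq, Finset.sum_insert hq, ← ih]
    rw [Submodule.Quotient.mk_add, Submodule.Quotient.mk_smul]

theorem sub_sum_smul (f : FreeMod k X Y) (r : (FreeMonoid X × Y) → FreeMod k X Y) :
    f - ∑ q ∈ suppF f, (f q.2 q.1) • r q
      = ∑ q ∈ suppF f, (f q.2 q.1) • (monoM (k := k) q - r q) := by
  calc f - ∑ q ∈ suppF f, (f q.2 q.1) • r q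
      = (∑ q ∈ suppF f, (f q.2 q.1) • monoM (k := k) q)
          - ∑ q ∈ suppF f, (f q.2 q.1) • r q := by rw [← eq_sum_monoM f]
    _ = ∑ q ∈ suppF f, ((f q.2 q.1) • monoM (k := k) q - (f q.2 q.1) • r q) :=
        (Finset.sum_sub_distrib _ _).symm
    _ = ∑ q ∈ suppF f, (f q.2 q.1) • (monoM (k := k) q - r q) :=
        Finset.sum_congr rfl fun q _ => (smul_sub _ _ _).symm

theorem li_of_two (hwo : IsWellOrder (FreeMonoid X) lt) (hwoY : IsWellOrder Y ltY)
    (hmono : ∀ u v a b : FreeMonoid X, lt u v → lt (a * u * b) (a * v * b))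
    (hmonic : ∀ s ∈ S, IsMonicElt lt ltY s)
    (h2 : ∀ f ∈ Submodule.span (FreeAssocAlg k X) S, f ≠ 0 →
      ∃ (a : FreeMonoid X) (ws wf : FreeMonoid X × Y) (s : FreeMod k X Y),
        s ∈ S ∧ LeadTerm lt ltY s ws ∧ LeadTerm lt ltY f wf ∧ wf = (a * ws.1, ws.2)) :
    LinearIndependent k (fun w : {w : FreeMonoid X × Y // RedW lt ltY S w} =>
      Submodule.Quotient.mk (p := Submodule.span (FreeAssocAlg k X) S) (monoM w.val)) := by
  classical
  rw [linearIndependent_iff']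
  intro t g hsum i hit
  set Sp := Submodule.span (FreeAssocAlg k X) S
  set h : FreeMod k X Y := ∑ j ∈ t, g j • monoM (k := k) j.val with hh
  have hcoeff : ∀ j ∈ t, h j.val.2 j.val.1 = g j := by
    intro j hjt
    rw [hh, Finsupp.finset_sum_apply, MonoidAlgebra.coeff_sum, Finsupp.finset_sum_apply]
    rw [Finset.sum_eq_single_of_mem j hjt]
    · show (g j • monoM (k := k) j.val) j.val.2 j.val.1 = g j
      rw [Finsupp.smul_apply, MonoidAlgebra.coeff_smul, Finsupp.smul_apply, smul_eq_mul]
      rw [monoM_coeff j.val j.val]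
      simp
    · intro b _ hbj
      show (g b • monoM (k := k) b.val) j.val.2 j.val.1 = 0
      rw [Finsupp.smul_apply, MonoidAlgebra.coeff_smul, Finsupp.smul_apply, smul_eq_mul]
      rw [monoM_coeff b.val j.val]
      rw [if_neg (fun he => hbj (Subtype.ext he.symm))]
      simp
  have hsupp : ∀ q : FreeMonoid X × Y, h q.2 q.1 ≠ 0 → RedW lt ltY S q := by
    intro q hq
    have : ∃ j ∈ t, (g j • monoM (k := k) j.val) q.2 q.1 ≠ 0 := by
      by_contra hall
      push_neg at hall
      apply hq
      rw [hh, Finsupp.finset_sum_apply, MonoidAlgebra.coeff_sum, Finsupp.finset_sum_apply]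
      exact Finset.sum_eq_zero hall
    rcases this with ⟨j, _, hj⟩
    rw [Finsupp.smul_apply, MonoidAlgebra.coeff_smul, Finsupp.smul_apply, smul_eq_mul, monoM_coeff j.val q] at hj
    by_cases he : q = j.val
    · exact he ▸ j.prop
    · rw [if_neg he] at hj; simp at hj
  have hmem : h ∈ Sp := by
    have hmk : Submodule.Quotient.mk (p := Sp) h = 0 := by
      have hmk_sum : (Submodule.Quotient.mk (p := Sp) h)
          = ∑ j ∈ t, g j • Submodule.Quotient.mk (p := Sp) (monoM (k := k) j.val) := by
        rw [hh]
        exact mk_sum_smul Sp t g _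
      rw [hmk_sum, ← hsum]
    exact (Submodule.Quotient.mk_eq_zero _).mp hmk
  by_cases hz : h = 0
  · have := hcoeff i hit
    rw [hz] at this
    exact this.symm
  · exfalso
    rcases h2 h hmem hz with ⟨a, ws, wf, s, hsS, hsw, hfw, hwe⟩
    exact hsupp wf hfw.1 a ws s hsS hsw hwe

theorem two_of_li (hwo : IsWellOrder (FreeMonoid X) lt) (hwoY : IsWellOrder Y ltY)
    (hmono : ∀ u v a b : FreeMonoid X, lt u v → lt (a * u * b) (a * v * b))
    (hmonic : ∀ s ∈ S, IsMonicElt lt ltY s)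
    (hli : LinearIndependent k (fun w : {w : FreeMonoid X × Y // RedW lt ltY S w} =>
      Submodule.Quotient.mk (p := Submodule.span (FreeAssocAlg k X) S) (monoM w.val))) :
    ∀ f ∈ Submodule.span (FreeAssocAlg k X) S, f ≠ 0 →
      ∃ (a : FreeMonoid X) (ws wf : FreeMonoid X × Y) (s : FreeMod k X Y),
        s ∈ S ∧ LeadTerm lt ltY s ws ∧ LeadTerm lt ltY f wf ∧ wf = (a * ws.1, ws.2) := by
  classical
  have sto := ltXY_sto hwo hwoY
  intro f hf hfne
  set Sp := Submodule.span (FreeAssocAlg k X) S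
  rcases exists_leadTerm hwo hwoY hfne with ⟨wf, hfw⟩
  by_contra hnot
  push_neg at hnot
  have hred : RedW lt ltY S wf := by
    intro a ws s hsS hsw hwe
    exact absurd hwe (by
      intro hwe'
      exact (hnot a ws wf s hsS hsw hfw) hwe')
  choose r hr1 hr2 hr3 hr4 using exists_reduction hwo hwoY hmono hmonic (S := S)
  set h : FreeMod k X Y := ∑ q ∈ suppF f, (f q.2 q.1) • r q with hh
  have hfh : f - h ∈ Sp := by
    have hEq : f - h = ∑ q ∈ suppF f, (f q.2 q.1) • (monoM (k := k) q - r q) := by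
      rw [hh]
      exact sub_sum_smul f r
    rw [hEq]
    exact Submodule.sum_mem _ fun q _ => Submodule.smul_of_tower_mem _ _ (hr1 q)
  have hhmem : h ∈ Sp := by
    have := Submodule.sub_mem _ hf hfh
    have he : f - (f - h) = h := by abel
    rwa [he] at this
  have hcoeffwf : h wf.2 wf.1 = f wf.2 wf.1 := by
    rw [hh, Finsupp.finset_sum_apply, MonoidAlgebra.coeff_sum, Finsupp.finset_sum_apply]
    have hwfmem : wf ∈ suppF f := mem_suppF.mpr hfw.1
    rw [Finset.sum_eq_single_of_mem wf hwfmem]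
    · rw [hr4 wf hred]
      show (f wf.2 wf.1 • monoM (k := k) wf) wf.2 wf.1 = f wf.2 wf.1
      rw [Finsupp.smul_apply, MonoidAlgebra.coeff_smul, Finsupp.smul_apply, smul_eq_mul, monoM_coeff wf wf]
      simp
    · intro q hq hqne
      show (f q.2 q.1 • r q) wf.2 wf.1 = 0
      rw [Finsupp.smul_apply, MonoidAlgebra.coeff_smul, Finsupp.smul_apply, smul_eq_mul]
      have : (r q) wf.2 wf.1 = 0 := by
        by_contra h0
        rcases hr3 q wf h0 with he | hlt
        · have hqlt : LtXY lt ltY q wf := hfw.2 q (mem_suppF.mp hq) hqne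
          exact sto.toIsStrictOrder.toIrrefl.irrefl q (he ▸ hqlt)
        · have hqlt : LtXY lt ltY q wf := hfw.2 q (mem_suppF.mp hq) hqne
          exact sto.toIsStrictOrder.toIrrefl.irrefl wf (sto.toIsStrictOrder.toIsTrans.trans _ _ _ hlt hqlt)
      rw [this, mul_zero]
  have hhne : h wf.2 wf.1 ≠ 0 := by rw [hcoeffwf]; exact hfw.1
  -- h is a combination of reduced monomials mapping to zero in the quotient
  have hhred : ∀ q ∈ suppF h, RedW lt ltY S q := by
    intro q hq
    have hq' := mem_suppF.mp hq
    have : ∃ p ∈ suppF f, ((f p.2 p.1) • r p) q.2 q.1 ≠ 0 := by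
      by_contra hall
      push_neg at hall
      apply hq'
      rw [hh, Finsupp.finset_sum_apply, MonoidAlgebra.coeff_sum, Finsupp.finset_sum_apply]
      exact Finset.sum_eq_zero hall
    rcases this with ⟨p, _, hp⟩
    have : (r p) q.2 q.1 ≠ 0 := by
      intro h0
      apply hp
      show (f p.2 p.1) • (r p) q.2 q.1 = 0
      rw [h0, smul_zero]
    exact hr2 p q this
  have hmk : Submodule.Quotient.mk (p := Sp) h = 0 := (Submodule.Quotient.mk_eq_zero _).mpr hhmem
  -- apply linear independence
  rw [linearIndependent_iff'] at hli
  set t : Finset {w : FreeMonoid X × Y // RedW lt ltY S w} :=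
    (suppF h).subtype (RedW lt ltY S) with ht
  have hsum0 : ∑ j ∈ t, (h j.val.2 j.val.1) •
      Submodule.Quotient.mk (p := Sp) (monoM (k := k) j.val) = 0 := by
    have h1 : ∑ j ∈ t, (h j.val.2 j.val.1) •
        Submodule.Quotient.mk (p := Sp) (monoM (k := k) j.val)
        = ∑ q ∈ suppF h, (h q.2 q.1) •
            Submodule.Quotient.mk (p := Sp) (monoM (k := k) q) := by
      rw [ht]
      exact Finset.sum_subtype_of_mem
        (fun q => (h q.2 q.1) • Submodule.Quotient.mk (p := Sp) (monoM (k := k) q)) hhred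
    rw [h1]
    have h2' : ∑ q ∈ suppF h, (h q.2 q.1) •
        Submodule.Quotient.mk (p := Sp) (monoM (k := k) q)
        = Submodule.Quotient.mk (p := Sp) (∑ q ∈ suppF h, (h q.2 q.1) • monoM (k := k) q) :=
      (mk_sum_smul Sp _ _ _).symm
    rw [h2', ← eq_sum_monoM h, hmk]
  have := hli t (fun j => h j.val.2 j.val.1) hsum0 ⟨wf, hred⟩
    (Finset.mem_subtype.mpr (mem_suppF.mpr hhne))
  exact hhne this

end Part3b

end CDaux
theorem composition_diamond_double_free_modules
    (lt : FreeMonoid X → FreeMonoid X → Prop)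
    (hwo : IsWellOrder (FreeMonoid X) lt)
    (hmono : ∀ u v a b : FreeMonoid X, lt u v → lt (a * u * b) (a * v * b))
    (ltY : Y → Y → Prop) (hwoY : IsWellOrder Y ltY)
    (S : Set (FreeMod k X Y)) (hne : S.Nonempty)
    (hmonic : ∀ s ∈ S, IsMonicElt lt ltY s) :
    -- (1) ↔ (2)
    ((IsGSBasisMod lt ltY S ↔
      ∀ f ∈ Submodule.span (FreeAssocAlg k X) S, f ≠ 0 →
        ∃ (a : FreeMonoid X) (ws wf : FreeMonoid X × Y) (s : FreeMod k X Y),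
          s ∈ S ∧ LeadTerm lt ltY s ws ∧ LeadTerm lt ltY f wf ∧ wf = (a * ws.1, ws.2))
    -- (2) ↔ (2')
    ∧ ((∀ f ∈ Submodule.span (FreeAssocAlg k X) S, f ≠ 0 →
        ∃ (a : FreeMonoid X) (ws wf : FreeMonoid X × Y) (s : FreeMod k X Y),
          s ∈ S ∧ LeadTerm lt ltY s ws ∧ LeadTerm lt ltY f wf ∧ wf = (a * ws.1, ws.2)) ↔
       (∀ f ∈ Submodule.span (FreeAssocAlg k X) S, f ≠ 0 →
        ∃ (n : ℕ) (α : Fin n → k) (a : Fin n → FreeMonoid X)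
          (s : Fin n → FreeMod k X Y) (ws : Fin n → FreeMonoid X × Y),
            (∀ i, α i ≠ 0) ∧ (∀ i, s i ∈ S) ∧ (∀ i, LeadTerm lt ltY (s i) (ws i)) ∧
            f = ∑ i, MonoidAlgebra.single (a i) (α i) • s i ∧
            ∀ i j : Fin n, i < j →
              LtXY lt ltY (a j * (ws j).1, (ws j).2) (a i * (ws i).1, (ws i).2)))
    -- (2) ↔ (3)
    ∧ ((∀ f ∈ Submodule.span (FreeAssocAlg k X) S, f ≠ 0 →
        ∃ (a : FreeMonoid X) (ws wf : FreeMonoid X × Y) (s : FreeMod k X Y),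
          s ∈ S ∧ LeadTerm lt ltY s ws ∧ LeadTerm lt ltY f wf ∧ wf = (a * ws.1, ws.2)) ↔
       (LinearIndependent k
          (fun w : {w : FreeMonoid X × Y //
              ∀ (a : FreeMonoid X) (ws : FreeMonoid X × Y) (s : FreeMod k X Y),
                s ∈ S → LeadTerm lt ltY s ws → w ≠ (a * ws.1, ws.2)} =>
            Submodule.Quotient.mk (p := Submodule.span (FreeAssocAlg k X) S)
              (Finsupp.single (w : FreeMonoid X × Y).2
                (MonoidAlgebra.single (w : FreeMonoid X × Y).1 (1 : k)))) ∧
        Submodule.span k (Set.range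
          (fun w : {w : FreeMonoid X × Y //
              ∀ (a : FreeMonoid X) (ws : FreeMonoid X × Y) (s : FreeMod k X Y),
                s ∈ S → LeadTerm lt ltY s ws → w ≠ (a * ws.1, ws.2)} =>
            Submodule.Quotient.mk (p := Submodule.span (FreeAssocAlg k X) S)
              (Finsupp.single (w : FreeMonoid X × Y).2
                (MonoidAlgebra.single (w : FreeMonoid X × Y).1 (1 : k))))) = ⊤))) := by
  exact ⟨⟨fun hgs => two_of_gs hwo hwoY hmono hmonic hgs,
      fun h2 => gs_of_two' hwo hwoY hmono hmonic (two'_of_two hwo hwoY hmono hmonic h2)⟩,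
    ⟨fun h2 => two'_of_two hwo hwoY hmono hmonic h2,
      fun h2' => two_of_two' hwo hwoY hmono hmonic h2'⟩,
    ⟨fun h2 => ⟨li_of_two hwo hwoY hmono hmonic h2, span_red_top hwo hwoY hmono hmonic⟩,
      fun h3 => two_of_li hwo hwoY hmono hmonic h3.1⟩⟩
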